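/- Suppose S ⊆ ℝ^n is a compact set with dim_F(S) < n. Then dim_F(S × ℝ^m) = dim_F(S), where S × ℝ^m ⊆ ℝ^{n+m}. -/

import Mathlib

open MeasureTheory Real Set

/-- The Fourier transform of a measure on `ℝ^n`:  `μ̂(ξ) = ∫ e^{−2πi x·ξ} dμ(x)`. -/
noncomputable def mft {n : ℕ} (μ : Measure (EuclideanSpace ℝ (Fin n)))
    (ξ : EuclideanSpace ℝ (Fin n)) : ℂ :=
  ∫ x, Complex.exp (((-2 * Real.pi * inner ℝ x ξ : ℝ) : ℂ) * Complex.I) ∂μ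

/-- The Fourier dimension of a set `A ⊆ ℝ^n`. -/
noncomputable def fourierDim {n : ℕ} (A : Set (EuclideanSpace ℝ (Fin n))) : ℝ :=
  sSup {s : ℝ | 0 ≤ s ∧ s ≤ (n : ℝ) ∧
    ∃ μ : Measure (EuclideanSpace ℝ (Fin n)), IsFiniteMeasure μ ∧ μ ≠ 0 ∧ μ Aᶜ = 0 ∧
      ∃ C : ℝ, ∀ ξ : EuclideanSpace ℝ (Fin n), ‖ξ‖ ^ (s / 2) * ‖mft μ ξ‖ ≤ C}

/-- The canonical identification of `ℝ^n × ℝ^m` with `ℝ^{n+m}`. -/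
noncomputable def prodMap (n m : ℕ)
    (p : EuclideanSpace ℝ (Fin n) × EuclideanSpace ℝ (Fin m)) :
    EuclideanSpace ℝ (Fin (n + m)) :=
  (EuclideanSpace.equiv (Fin (n + m)) ℝ).symm
    (Fin.append (EuclideanSpace.equiv (Fin n) ℝ p.1) (EuclideanSpace.equiv (Fin m) ℝ p.2))

/-! If a finite measure `μ` on `S` satisfies `|μ̂(ξ)| ≲ |ξ|^{-s/2}`, then `μ ⊗ γ`, with `γ` the
standard Gaussian on `ℝ^m`, lives on `S × ℝ^m` and has the same decay, because
`(μ ⊗ γ)^(ξ, η) = μ̂(ξ) γ̂(η)` and `γ̂` decays faster than any power. Conversely, the projection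
to `ℝ^n` of a measure `ρ` on `S × ℝ^m` lives on `S` and has Fourier transform `ξ ↦ ρ̂(ξ, 0)`, so it
inherits the decay of `ρ`. Hence `S` and `S × ℝ^m` have the same admissible exponents, except
that those in `(n, n + m]` are allowed for `S × ℝ^m` only; `dim_F S < n` excludes them, since
projecting would give a measure on `S` with decay of order `n`. -/

open ProbabilityTheory

section

variable {n m : ℕ}

noncomputable def prodMapEquiv (n m : ℕ) :
    (EuclideanSpace ℝ (Fin n) × EuclideanSpace ℝ (Fin m)) ≃ᵐ EuclideanSpace ℝ (Fin (n + m)) :=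
  EuclideanSpace.finAddEquivProd.symm.toHomeomorph.toMeasurableEquiv

lemma coe_prodMapEquiv : ⇑(prodMapEquiv n m) = prodMap n m := by
  funext p
  ext j
  induction j using Fin.addCases with
  | left i => simp [prodMapEquiv, prodMap]
  | right i => simp [prodMapEquiv, prodMap]

lemma measurable_prodMap : Measurable (prodMap n m) :=
  coe_prodMapEquiv (n := n) (m := m) ▸ (prodMapEquiv n m).measurable

lemma inner_prodMap (x a : EuclideanSpace ℝ (Fin n)) (y b : EuclideanSpace ℝ (Fin m)) :
    inner ℝ (prodMap n m (x, y)) (prodMap n m (a, b)) = inner ℝ x a + inner ℝ y b := by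
  simp only [PiLp.inner_apply, RCLike.inner_apply, conj_trivial, prodMap, Fin.sum_univ_add]
  simp

lemma norm_prodMap_sq (x : EuclideanSpace ℝ (Fin n)) (y : EuclideanSpace ℝ (Fin m)) :
    ‖prodMap n m (x, y)‖ ^ 2 = ‖x‖ ^ 2 + ‖y‖ ^ 2 := by
  simpa only [real_inner_self_eq_norm_sq] using inner_prodMap x x y y

lemma norm_prodMap_zero_right (x : EuclideanSpace ℝ (Fin n)) :
    ‖prodMap n m (x, 0)‖ = ‖x‖ := by
  have h := norm_prodMap_sq (m := m) x 0
  rwa [norm_zero, zero_pow two_ne_zero, add_zero, sq_eq_sq₀ (norm_nonneg _) (norm_nonneg _)] at h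

lemma norm_prodMap_le (x : EuclideanSpace ℝ (Fin n)) (y : EuclideanSpace ℝ (Fin m)) :
    ‖prodMap n m (x, y)‖ ≤ ‖x‖ + ‖y‖ := by
  nlinarith [norm_prodMap_sq x y, norm_nonneg (prodMap n m (x, y)), norm_nonneg x, norm_nonneg y]

lemma mft_eq_charFun (μ : Measure (EuclideanSpace ℝ (Fin n)))
    (ξ : EuclideanSpace ℝ (Fin n)) : mft μ ξ = charFun μ (-(2 * π) • ξ) := by
  simp only [mft, charFun_apply, inner_smul_right]
  congr with x
  push_cast
  ring_nf

lemma norm_mft_le (μ : Measure (EuclideanSpace ℝ (Fin n))) (ξ : EuclideanSpace ℝ (Fin n)) :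
    ‖mft μ ξ‖ ≤ μ.real univ :=
  mft_eq_charFun μ ξ ▸ norm_charFun_le _

lemma norm_mft_stdGaussian (ξ : EuclideanSpace ℝ (Fin n)) :
    ‖mft (stdGaussian (EuclideanSpace ℝ (Fin n))) ξ‖ = rexp (-(2 * π ^ 2) * ‖ξ‖ ^ 2) := by
  rw [mft_eq_charFun, charFun_stdGaussian, Complex.norm_exp]
  congr 1
  norm_cast
  rw [norm_smul, norm_neg, Real.norm_of_nonneg two_pi_pos.le]
  ring

lemma mft_map_prodMap_prod (μ : Measure (EuclideanSpace ℝ (Fin n)))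
    (ν : Measure (EuclideanSpace ℝ (Fin m))) [SFinite μ] [SFinite ν]
    (ξ : EuclideanSpace ℝ (Fin n)) (η : EuclideanSpace ℝ (Fin m)) :
    mft ((μ.prod ν).map (prodMap n m)) (prodMap n m (ξ, η)) = mft μ ξ * mft ν η := by
  simp only [mft]
  rw [integral_map measurable_prodMap.aemeasurable (by fun_prop), ← integral_prod_mul]
  congr with ⟨x, y⟩
  rw [inner_prodMap, ← Complex.exp_add]
  congr 1
  push_cast
  ring

lemma mft_map_fst_prodMapEquiv_symm (μ : Measure (EuclideanSpace ℝ (Fin (n + m))))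
    (ξ : EuclideanSpace ℝ (Fin n)) :
    mft (μ.map fun z => ((prodMapEquiv n m).symm z).1) ξ = mft μ (prodMap n m (ξ, 0)) := by
  rw [mft, integral_map (by fun_prop) (by fun_prop), mft]
  congr with z
  conv_rhs => rw [← (prodMapEquiv n m).apply_symm_apply z, coe_prodMapEquiv, inner_prodMap]
  simp

lemma rpow_mul_exp_neg_sq_le {p t : ℝ} (hp : 0 ≤ p) (ht : 0 ≤ t) :
    t ^ p * rexp (-t ^ 2) ≤ rexp (p ^ 2 / 4) := by
  rcases ht.eq_or_lt with rfl | ht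
  · simpa using (zero_rpow_le_one p).trans (one_le_exp (by positivity))
  · rw [rpow_def_of_pos ht, ← exp_add, exp_le_exp]
    nlinarith [log_le_sub_one_of_pos ht, sq_nonneg (t - p / 2)]

def HasFourierDecay (μ : Measure (EuclideanSpace ℝ (Fin n))) (s : ℝ) : Prop :=
  ∃ C, ∀ ξ, ‖ξ‖ ^ (s / 2) * ‖mft μ ξ‖ ≤ C

lemma HasFourierDecay.mono {μ : Measure (EuclideanSpace ℝ (Fin n))} [IsFiniteMeasure μ]
    {s s' : ℝ} (h : HasFourierDecay μ s) (hs' : 0 ≤ s') (hss : s' ≤ s) :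
    HasFourierDecay μ s' := by
  obtain ⟨C, hC⟩ := h
  refine ⟨max C (μ.real univ), fun ξ => ?_⟩
  rcases le_total ‖ξ‖ 1 with h | h
  · calc ‖ξ‖ ^ (s' / 2) * ‖mft μ ξ‖ ≤ 1 * μ.real univ :=
          mul_le_mul (rpow_le_one (norm_nonneg _) h (by linarith)) (norm_mft_le μ ξ)
            (norm_nonneg _) zero_le_one
      _ ≤ _ := (one_mul _).trans_le (le_max_right _ _)
  · calc ‖ξ‖ ^ (s' / 2) * ‖mft μ ξ‖ ≤ ‖ξ‖ ^ (s / 2) * ‖mft μ ξ‖ := by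
          gcongr
      _ ≤ _ := (hC ξ).trans (le_max_left _ _)

lemma hasFourierDecay_stdGaussian {s : ℝ} (hs : 0 ≤ s) :
    HasFourierDecay (stdGaussian (EuclideanSpace ℝ (Fin n))) s := by
  refine ⟨rexp ((s / 2) ^ 2 / 4), fun ξ => ?_⟩
  rw [norm_mft_stdGaussian]
  calc ‖ξ‖ ^ (s / 2) * rexp (-(2 * π ^ 2) * ‖ξ‖ ^ 2) ≤ ‖ξ‖ ^ (s / 2) * rexp (-‖ξ‖ ^ 2) := by
        gcongr
        have hπ : 1 ≤ 2 * π ^ 2 := by nlinarith [pi_gt_three]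
        nlinarith [mul_le_mul_of_nonneg_right hπ (sq_nonneg ‖ξ‖)]
    _ ≤ _ := rpow_mul_exp_neg_sq_le (by linarith) (norm_nonneg _)

lemma HasFourierDecay.map_prodMap_prod {μ : Measure (EuclideanSpace ℝ (Fin n))}
    {ν : Measure (EuclideanSpace ℝ (Fin m))} [IsFiniteMeasure μ] [IsFiniteMeasure ν] {s : ℝ}
    (hμ : HasFourierDecay μ s) (hν : HasFourierDecay ν s) (hs : 0 ≤ s) :
    HasFourierDecay ((μ.prod ν).map (prodMap n m)) s := by
  obtain ⟨C, hC⟩ := hμ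
  obtain ⟨D, hD⟩ := hν
  refine ⟨2 ^ (s / 2) * max (C * ν.real univ) (D * μ.real univ), fun ζ => ?_⟩
  obtain ⟨⟨ξ, η⟩, rfl⟩ := (prodMapEquiv n m).surjective ζ
  have hp : 0 ≤ s / 2 := by linarith
  have hC0 : 0 ≤ C := (by positivity : (0 : ℝ) ≤ _).trans (hC ξ)
  have hD0 : 0 ≤ D := (by positivity : (0 : ℝ) ≤ _).trans (hD η)
  have hnorm : ‖prodMap n m (ξ, η)‖ ^ (s / 2) ≤
      2 ^ (s / 2) * max (‖ξ‖ ^ (s / 2)) (‖η‖ ^ (s / 2)) := by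
    rw [← rpow_max (norm_nonneg _) (norm_nonneg _) hp, ← mul_rpow zero_le_two (by positivity)]
    gcongr
    linarith [norm_prodMap_le ξ η, le_max_left ‖ξ‖ ‖η‖, le_max_right ‖ξ‖ ‖η‖]
  rw [coe_prodMapEquiv, mft_map_prodMap_prod, norm_mul]
  calc ‖prodMap n m (ξ, η)‖ ^ (s / 2) * (‖mft μ ξ‖ * ‖mft ν η‖)
      ≤ 2 ^ (s / 2) * max (‖ξ‖ ^ (s / 2)) (‖η‖ ^ (s / 2)) * (‖mft μ ξ‖ * ‖mft ν η‖) := by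
        gcongr
    _ = 2 ^ (s / 2) * max (‖ξ‖ ^ (s / 2) * ‖mft μ ξ‖ * ‖mft ν η‖)
          (‖η‖ ^ (s / 2) * ‖mft ν η‖ * ‖mft μ ξ‖) := by
        rw [mul_assoc, max_mul_of_nonneg _ _ (by positivity)]
        ring_nf
    _ ≤ _ := by
        gcongr 2 ^ (s / 2) * max ?_ ?_
        exacts [mul_le_mul (hC ξ) (norm_mft_le ν η) (norm_nonneg _) hC0,
          mul_le_mul (hD η) (norm_mft_le μ ξ) (norm_nonneg _) hD0]

lemma HasFourierDecay.map_fst_prodMapEquiv_symm {μ : Measure (EuclideanSpace ℝ (Fin (n + m)))}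
    {s : ℝ} (h : HasFourierDecay μ s) :
    HasFourierDecay (μ.map fun z => ((prodMapEquiv n m).symm z).1) s := by
  obtain ⟨C, hC⟩ := h
  refine ⟨C, fun ξ => ?_⟩
  simpa only [mft_map_fst_prodMapEquiv_symm, norm_prodMap_zero_right] using hC (prodMap n m (ξ, 0))

def SupportsFourierDecay (A : Set (EuclideanSpace ℝ (Fin n))) (s : ℝ) : Prop :=
  ∃ μ : Measure (EuclideanSpace ℝ (Fin n)), IsFiniteMeasure μ ∧ μ ≠ 0 ∧ μ Aᶜ = 0 ∧
    HasFourierDecay μ s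

lemma fourierDim_eq_sSup (A : Set (EuclideanSpace ℝ (Fin n))) :
    fourierDim A = sSup {s : ℝ | 0 ≤ s ∧ s ≤ n ∧ SupportsFourierDecay A s} :=
  rfl

lemma le_fourierDim {A : Set (EuclideanSpace ℝ (Fin n))} {s : ℝ} (hs : 0 ≤ s) (hsn : s ≤ n)
    (h : SupportsFourierDecay A s) : s ≤ fourierDim A :=
  (fourierDim_eq_sSup A).symm ▸ le_csSup ⟨n, fun _ ht => ht.2.1⟩ ⟨hs, hsn, h⟩

lemma SupportsFourierDecay.mono {A : Set (EuclideanSpace ℝ (Fin n))} {s s' : ℝ}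
    (h : SupportsFourierDecay A s) (hs' : 0 ≤ s') (hss : s' ≤ s) : SupportsFourierDecay A s' := by
  obtain ⟨μ, hμ, hμ0, hμA, hdecay⟩ := h
  exact ⟨μ, hμ, hμ0, hμA, hdecay.mono hs' hss⟩

lemma SupportsFourierDecay.prod_univ {S : Set (EuclideanSpace ℝ (Fin n))} {s : ℝ}
    (h : SupportsFourierDecay S s) (hs : 0 ≤ s) :
    SupportsFourierDecay (prodMap n m '' (S ×ˢ univ)) s := by
  obtain ⟨μ, hμ, hμ0, hμS, hdecay⟩ := h
  refine ⟨(μ.prod (stdGaussian _)).map (prodMap n m), inferInstance, ?_, ?_,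
    hdecay.map_prodMap_prod (hasFourierDecay_stdGaussian hs) hs⟩
  · rw [Measure.map_ne_zero_iff measurable_prodMap.aemeasurable, ← Measure.measure_univ_ne_zero,
      ← univ_prod_univ, Measure.prod_prod, measure_univ (μ := stdGaussian _), mul_one,
      Measure.measure_univ_ne_zero]
    exact hμ0
  · rw [← coe_prodMapEquiv, MeasurableEquiv.map_apply, preimage_compl,
      MeasurableEquiv.preimage_image, compl_prod_eq_union]
    simp [Measure.prod_prod, hμS]

lemma SupportsFourierDecay.of_prod_univ {S : Set (EuclideanSpace ℝ (Fin n))} {s : ℝ}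
    (hS : MeasurableSet S) (h : SupportsFourierDecay (prodMap n m '' (S ×ˢ univ)) s) :
    SupportsFourierDecay S s := by
  obtain ⟨μ, hμ, hμ0, hμA, hdecay⟩ := h
  have hfst : Measurable fun z => ((prodMapEquiv n m).symm z).1 := by fun_prop
  refine ⟨μ.map _, inferInstance, (Measure.map_ne_zero_iff hfst.aemeasurable).2 hμ0, ?_,
    hdecay.map_fst_prodMapEquiv_symm⟩
  rw [Measure.map_apply hfst hS.compl, ← hμA, ← coe_prodMapEquiv,
    MeasurableEquiv.image_eq_preimage_symm]
  congr 1
  ext z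
  simp
end

/-- For a compact `S ⊆ ℝ^n` with `dim_F S < n`, `dim_F(S × ℝ^m) = dim_F S`. -/
theorem statement13 (n m : ℕ)
    (S : Set (EuclideanSpace ℝ (Fin n)))
    (hS : IsCompact S)
    (hSd : fourierDim S < (n : ℝ)) :
    fourierDim (prodMap n m '' (S ×ˢ (Set.univ : Set (EuclideanSpace ℝ (Fin m)))))
      = fourierDim S := by
  rw [fourierDim_eq_sSup, fourierDim_eq_sSup]
  congr 1
  ext s
  constructor
  · rintro ⟨hs, -, hA⟩
    have hS' : SupportsFourierDecay S s := hA.of_prod_univ hS.isClosed.measurableSet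
    refine ⟨hs, not_lt.1 fun hns => hSd.not_ge ?_, hS'⟩
    exact le_fourierDim n.cast_nonneg le_rfl (hS'.mono n.cast_nonneg hns.le)
  · rintro ⟨hs, hsn, hS'⟩
    exact ⟨hs, hsn.trans (by simp), hS'.prod_univ hs⟩
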